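/- Converse construction of the Gibbs-preserving map: let Γ_X, Γ_{X'} ≥ 0 and let 𝓣 : X → X' be completely positive trace non-increasing with 𝓣(Γ_X) ≤ e^{w} Γ_{X'}. Let W be a battery with Γ_W = I_W, P^m, P^{m'} projectors of ranks e^m, e^{m'} with m' − m ≥ w. Then the map Φ(ω) = 𝓣(tr_W[P^m ω]) ⊗ (P^{m'}/e^{m'}) on X ⊗ W is completely positive and satisfies Φ(Γ_X ⊗ I_W) ≤ Γ_{X'} ⊗ I_W. -/

import Mathlib

open Matrix Kronecker
open scoped ComplexOrder Classical

noncomputable section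

/-- Complete positivity of a (linear) map between matrix algebras, via positivity of
its Choi matrix. -/
def IsCPfun {n m : Type*} [Fintype n] [DecidableEq n] [Fintype m] [DecidableEq m]
    (E : Matrix n n ℂ → Matrix m m ℂ) : Prop :=
  (Matrix.of fun (p q : m × n) =>
    E (Matrix.single p.2 q.2 (1 : ℂ)) p.1 q.1).PosSemidef

/-- Partial trace over the second tensor factor. -/
def ptr2 {A B : Type*} [Fintype A] [Fintype B]
    (M : Matrix (A × B) (A × B) ℂ) : Matrix A A ℂ :=
  Matrix.of fun a b => ∑ w, M (a, w) (b, w)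


lemma kron_conjTranspose {l m n p : Type*} (A : Matrix l m ℂ) (B : Matrix n p ℂ) :
    (A ⊗ₖ B)ᴴ = Aᴴ ⊗ₖ Bᴴ := by
  ext ⟨i, j⟩ ⟨k, l⟩
  simp [conjTranspose_apply, kroneckerMap_apply]

lemma psd_kron {m n : Type*} [Fintype m] [Fintype n] {A : Matrix m m ℂ} {B : Matrix n n ℂ}
    (hA : A.PosSemidef) (hB : B.PosSemidef) : (A ⊗ₖ B).PosSemidef := by
  exact hA.kronecker hB

lemma psd_smul {n : Type*} [Fintype n] {A : Matrix n n ℂ} (hA : A.PosSemidef)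
    {c : ℝ} (hc : 0 ≤ c) : ((c : ℂ) • A).PosSemidef := by
  refine Matrix.posSemidef_iff_dotProduct_mulVec.mpr ⟨?_, ?_⟩
  · unfold Matrix.IsHermitian
    rw [conjTranspose_smul, hA.1.eq]
    simp
  · intro x
    rw [smul_mulVec, dotProduct_smul, smul_eq_mul]
    exact mul_nonneg (by exact_mod_cast hc) (hA.dotProduct_mulVec_nonneg x)

lemma proj_psd {W : Type*} [Fintype W] [DecidableEq W] {P : Matrix W W ℂ}
    (hh : Pᴴ = P) (hp : P * P = P) : P.PosSemidef := by
  have : P = Pᴴ * P := by rw [hh, hp]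
  rw [this]; exact Matrix.posSemidef_conjTranspose_mul_self _

lemma proj_trace_eq_rank {W : Type*} [Fintype W] [DecidableEq W] {P : Matrix W W ℂ}
    (hh : Pᴴ = P) (hp : P * P = P) : P.trace = (P.rank : ℂ) := by
  have hA : P.IsHermitian := hh
  have hdiag : star (hA.eigenvectorUnitary : Matrix W W ℂ) * P * (hA.eigenvectorUnitary : Matrix W W ℂ) =
      diagonal (RCLike.ofReal ∘ hA.eigenvalues) := by
    have := hA.conjStarAlgAut_star_eigenvectorUnitary
    rwa [Unitary.conjStarAlgAut_apply, Unitary.coe_star, star_star] at this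
  have hUU : star (hA.eigenvectorUnitary : Matrix W W ℂ) * (hA.eigenvectorUnitary : Matrix W W ℂ)
      = 1 := Matrix.mem_unitaryGroup_iff'.mp (hA.eigenvectorUnitary).2
  have hUU2 : (hA.eigenvectorUnitary : Matrix W W ℂ) * star (hA.eigenvectorUnitary : Matrix W W ℂ)
      = 1 := Matrix.mem_unitaryGroup_iff.mp (hA.eigenvectorUnitary).2
  have hD : (diagonal (RCLike.ofReal ∘ hA.eigenvalues) : Matrix W W ℂ) *
      diagonal (RCLike.ofReal ∘ hA.eigenvalues) = diagonal (RCLike.ofReal ∘ hA.eigenvalues) := by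
    conv_lhs => rw [← hdiag]
    conv_rhs => rw [← hdiag]
    calc (star (hA.eigenvectorUnitary : Matrix W W ℂ) * P * hA.eigenvectorUnitary) *
          (star (hA.eigenvectorUnitary : Matrix W W ℂ) * P * hA.eigenvectorUnitary)
        = star (hA.eigenvectorUnitary : Matrix W W ℂ) *
            (P * (((hA.eigenvectorUnitary : Matrix W W ℂ) *
              star (hA.eigenvectorUnitary : Matrix W W ℂ)) * (P * hA.eigenvectorUnitary))) := by
          simp only [Matrix.mul_assoc]
      _ = star (hA.eigenvectorUnitary : Matrix W W ℂ) * P * hA.eigenvectorUnitary := by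
          rw [hUU2, Matrix.one_mul, ← Matrix.mul_assoc P P, hp, Matrix.mul_assoc]
  have heig : ∀ i, hA.eigenvalues i = 0 ∨ hA.eigenvalues i = 1 := by
    intro i
    rw [Matrix.diagonal_mul_diagonal] at hD
    have h1 := congrFun (congrFun hD i) i
    simp [Matrix.diagonal_apply_eq] at h1
    have h2 : hA.eigenvalues i * hA.eigenvalues i = hA.eigenvalues i := by
      exact_mod_cast h1
    have h3 : hA.eigenvalues i * (hA.eigenvalues i - 1) = 0 := by linear_combination h2
    rcases mul_eq_zero.mp h3 with h | h
    · exact Or.inl h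
    · exact Or.inr (by linarith)
  have htr : P.trace = ∑ i, (hA.eigenvalues i : ℂ) := by
    conv_lhs => rw [hA.spectral_theorem, Unitary.conjStarAlgAut_apply]
    rw [Matrix.trace_mul_cycle, hUU, Matrix.one_mul, Matrix.trace_diagonal]
    simp [Function.comp]
  rw [htr, hA.rank_eq_card_non_zero_eigs]
  rw [Fintype.card_subtype]
  push_cast
  rw [Finset.card_filter]
  push_cast
  apply Finset.sum_congr rfl
  intro i _
  rcases heig i with h | h <;> simp [h]

set_option maxHeartbeats 1000000 in
/-- **Converse construction of the Gibbs-preserving map.** If `𝓣` is completely positive,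
trace non-increasing with `𝓣(Γ_X) ≤ e^w Γ_{X'}`, and `P^m, P^{m'}` are battery projectors of
ranks `r = e^m`, `r' = e^{m'}` with `m' − m ≥ w`, then the map
`Φ(ω) = 𝓣(tr_W[P^m ω]) ⊗ (P^{m'}/e^{m'})` is completely positive and satisfies
`Φ(Γ_X ⊗ I_W) ≤ Γ_{X'} ⊗ I_W`. -/
theorem gibbs_preserving_map_construction {X X' W : Type*}
    [Fintype X] [DecidableEq X] [Fintype X'] [DecidableEq X'] [Fintype W] [DecidableEq W]
    (ΓX : Matrix X X ℂ) (ΓX' : Matrix X' X' ℂ)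
    (hΓX : ΓX.PosSemidef) (hΓX' : ΓX'.PosSemidef)
    (T : Matrix X X ℂ →ₗ[ℂ] Matrix X' X' ℂ)
    (hTCP : IsCPfun fun M => T M)
    (hTNI : ∀ ρ : Matrix X X ℂ, ρ.PosSemidef → ((T ρ).trace).re ≤ (ρ.trace).re)
    (w : ℝ)
    (hTΓ : ((((Real.exp w : ℝ) : ℂ)) • ΓX' - T ΓX).PosSemidef)
    (r r' : ℕ) (hr : 0 < r) (hr' : 0 < r')
    (Pm Pm' : Matrix W W ℂ)
    (hPh : Pmᴴ = Pm) (hPp : Pm * Pm = Pm) (hPrank : Pm.rank = r)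
    (hP'h : Pm'ᴴ = Pm') (hP'p : Pm' * Pm' = Pm') (hP'rank : Pm'.rank = r')
    (hw : w ≤ Real.log r' - Real.log r) :
    IsCPfun (fun ω : Matrix (X × W) (X × W) ℂ =>
        (T (ptr2 (((1 : Matrix X X ℂ) ⊗ₖ Pm) * ω))) ⊗ₖ (((r' : ℂ))⁻¹ • Pm')) ∧
      (((ΓX' ⊗ₖ (1 : Matrix W W ℂ))) -
        (T (ptr2 (((1 : Matrix X X ℂ) ⊗ₖ Pm) * (ΓX ⊗ₖ (1 : Matrix W W ℂ)))))
          ⊗ₖ (((r' : ℂ))⁻¹ • Pm')).PosSemidef := by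
  have hr'0 : (r' : ℂ) ≠ 0 := Nat.cast_ne_zero.mpr hr'.ne'
  have hPpsd : Pm.PosSemidef := proj_psd hPh hPp
  have hP'psd : Pm'.PosSemidef := proj_psd hP'h hP'p
  have hPtr : Pm.trace = (r : ℂ) := by rw [proj_trace_eq_rank hPh hPp, hPrank]
  have hP'tr : Pm'.trace = (r' : ℂ) := by rw [proj_trace_eq_rank hP'h hP'p, hP'rank]
  constructor
  · -- complete positivity
    unfold IsCPfun
    have hkey : ∀ (x y : X) (w0 v : W),
        ptr2 (((1 : Matrix X X ℂ) ⊗ₖ Pm) * Matrix.single (x, w0) (y, v) (1 : ℂ))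
          = Pm v w0 • Matrix.single x y (1 : ℂ) := by
      intro x y w0 v
      ext a b
      have hterm : ∀ u : W,
          ((((1 : Matrix X X ℂ) ⊗ₖ Pm) * Matrix.single (x, w0) (y, v) (1 : ℂ)) (a, u) (b, u))
            = if u = v ∧ b = y then (if a = x then Pm v w0 else 0) else 0 := by
        intro u
        by_cases h : u = v ∧ b = y
        · obtain ⟨rfl, rfl⟩ := h
          rw [Matrix.mul_single_apply_same]
          by_cases hax : a = x <;>
            simp [kroneckerMap_apply, Matrix.one_apply, hax, eq_comm]
        · rw [Matrix.mul_single_apply_of_ne]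
          · simp [h]
          · intro hc
            exact h ⟨(Prod.ext_iff.mp hc).2, (Prod.ext_iff.mp hc).1⟩
      show (∑ u, (((1 : Matrix X X ℂ) ⊗ₖ Pm) * Matrix.single (x, w0) (y, v) (1 : ℂ)) (a, u) (b, u)) = _
      simp only [hterm, ite_and]
      rw [Finset.sum_ite_eq']
      simp only [Finset.mem_univ, if_true, Matrix.smul_apply, Matrix.single,
        Matrix.of_apply, smul_eq_mul]
      rcases eq_or_ne a x with rfl | hax
      · rcases eq_or_ne b y with rfl | hby
        · simp
        · simp [hby, hby.symm]
      · simp [hax, hax.symm]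
    have hchoi :
        (Matrix.of fun (p q : (X' × W) × (X × W)) =>
          ((T (ptr2 (((1 : Matrix X X ℂ) ⊗ₖ Pm) * Matrix.single p.2 q.2 (1 : ℂ))))
            ⊗ₖ (((r' : ℂ))⁻¹ • Pm')) p.1 q.1)
        = (((Matrix.of fun (p q : X' × X) =>
              T (Matrix.single p.2 q.2 (1 : ℂ)) p.1 q.1) ⊗ₖ Pmᵀ)
            ⊗ₖ (((r' : ℂ))⁻¹ • Pm')).submatrix
            (fun p : (X' × W) × (X × W) => (((p.1.1, p.2.1), p.2.2), p.1.2))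
            (fun p : (X' × W) × (X × W) => (((p.1.1, p.2.1), p.2.2), p.1.2)) := by
      ext ⟨⟨x', u'⟩, ⟨x, w0⟩⟩ ⟨⟨y', v'⟩, ⟨y, v⟩⟩
      simp only [Matrix.of_apply, Matrix.submatrix_apply, kroneckerMap_apply,
        Matrix.transpose_apply, Matrix.smul_apply, smul_eq_mul]
      rw [hkey, _root_.map_smul]
      simp only [Matrix.smul_apply, smul_eq_mul]
      ring
    rw [hchoi]
    have hCT : (Matrix.of fun (p q : X' × X) =>
        T (Matrix.single p.2 q.2 (1 : ℂ)) p.1 q.1).PosSemidef := hTCP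
    apply Matrix.PosSemidef.submatrix
    apply psd_kron (psd_kron hCT hPpsd.transpose)
    rw [show ((r' : ℂ))⁻¹ = ((((r' : ℝ))⁻¹ : ℝ) : ℂ) by push_cast; ring]
    exact psd_smul hP'psd (by positivity)
  · -- Gibbs sub-preservation
    have hmul : ((1 : Matrix X X ℂ) ⊗ₖ Pm) * (ΓX ⊗ₖ (1 : Matrix W W ℂ)) = ΓX ⊗ₖ Pm := by
      rw [← Matrix.mul_kronecker_mul, Matrix.one_mul, Matrix.mul_one]
    have hptr : ptr2 (ΓX ⊗ₖ Pm) = (r : ℂ) • ΓX := by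
      ext a b
      simp only [ptr2, Matrix.of_apply, kroneckerMap_apply, Matrix.smul_apply, smul_eq_mul,
        ← Finset.mul_sum]
      rw [show (∑ u, Pm u u) = Pm.trace from rfl, hPtr]
      ring
    rw [hmul, hptr, _root_.map_smul]
    have hcw : (r : ℝ) / (r' : ℝ) * Real.exp w ≤ 1 := by
      have hrr : (0:ℝ) < (r:ℝ) := by exact_mod_cast hr
      have hrr' : (0:ℝ) < (r':ℝ) := by exact_mod_cast hr'
      have h1 : Real.exp w ≤ (r' : ℝ) / (r : ℝ) := by
        have : w ≤ Real.log ((r' : ℝ) / (r : ℝ)) := by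
          rw [Real.log_div hrr'.ne' hrr.ne']; exact hw
        calc Real.exp w ≤ Real.exp (Real.log ((r':ℝ)/(r:ℝ))) := Real.exp_le_exp.mpr this
          _ = (r':ℝ)/(r:ℝ) := Real.exp_log (by positivity)
      rw [div_mul_eq_mul_div, div_le_one hrr']
      calc (r:ℝ) * Real.exp w ≤ (r:ℝ) * ((r':ℝ)/(r:ℝ)) := by
            exact mul_le_mul_of_nonneg_left h1 hrr.le
        _ = (r':ℝ) := by field_simp
    have hdecomp : ΓX' ⊗ₖ (1 : Matrix W W ℂ) - ((r : ℂ) • T ΓX) ⊗ₖ (((r' : ℂ))⁻¹ • Pm')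
        = ΓX' ⊗ₖ ((1 : Matrix W W ℂ) - Pm')
          + ((1 - (r : ℝ) / (r' : ℝ) * Real.exp w : ℝ) : ℂ) • (ΓX' ⊗ₖ Pm')
          + (((r : ℝ) / (r' : ℝ) : ℝ) : ℂ) •
              ((((Real.exp w : ℝ) : ℂ) • ΓX' - T ΓX) ⊗ₖ Pm') := by
      ext ⟨a, u⟩ ⟨b, v⟩
      simp only [Matrix.sub_apply, Matrix.add_apply, Matrix.smul_apply, kroneckerMap_apply,
        Matrix.one_apply, smul_eq_mul]
      push_cast
      by_cases huv : u = v <;> field_simp [huv] <;> ring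
    rw [hdecomp]
    have h1 : (ΓX' ⊗ₖ ((1 : Matrix W W ℂ) - Pm')).PosSemidef := by
      refine psd_kron hΓX' (proj_psd ?_ ?_)
      · rw [conjTranspose_sub, hP'h, conjTranspose_one]
      · simp only [Matrix.sub_mul, Matrix.mul_sub, one_mul, mul_one, hP'p]
        abel
    have h2 : (((1 - (r : ℝ) / (r' : ℝ) * Real.exp w : ℝ) : ℂ) • (ΓX' ⊗ₖ Pm')).PosSemidef :=
      psd_smul (psd_kron hΓX' hP'psd) (by linarith)
    have h3 : ((((r : ℝ) / (r' : ℝ) : ℝ) : ℂ) •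
        ((((Real.exp w : ℝ) : ℂ) • ΓX' - T ΓX) ⊗ₖ Pm')).PosSemidef :=
      psd_smul (psd_kron hTΓ hP'psd) (by positivity)
    exact (h1.add h2).add h3
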